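/- Let (H, ⇀, ↼) be a matched pair of actions on a Hopf algebra H. The following are equivalent: (1) for all x, y ∈ H, (x₁ ⇀ y₁) ⇀ (x₂ ↼ y₂) = ε(y)x and (x₁ ⇀ y₁) ↼ (x₂ ↼ y₂) = ε(x)y; (2) for all x, y ∈ H, x ↼ y = S(x₁ ⇀ y) ⇀ x₂. -/

import Mathlib

open TensorProduct Coalgebra HopfAlgebra LinearMap

noncomputable section

variable (k H : Type*) [CommRing k] [Ring H] [HopfAlgebra k H]

universe w1 w2 w3 w4 w5 w6 w7 w8 w9 w10 w11 w12 w13 w14 w15 w16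

/-- The December 2024 `Coalgebra.Repr`, with its index type bundled as a field. -/
structure CoalgRepr (R : Type*) {A : Type*}
    [CommSemiring R] [AddCommMonoid A] [Module R A] [CoalgebraStruct R A] (a : A) where
  {ι : Type*}
  index : Finset ι
  left : ι → A
  right : ι → A
  eq : ∑ i ∈ index, left i ⊗ₜ[R] right i = CoalgebraStruct.comul a

/-- `f` is a left `H`-module coalgebra action of the Hopf algebra `H` on itself. -/
structure IsLeftModCoalgAction (f : H ⊗[k] H →ₗ[k] H) : Prop where
  one_act : ∀ a : H, f (1 ⊗ₜ a) = a
  mul_act : ∀ x y a : H, f ((x * y) ⊗ₜ a) = f (x ⊗ₜ f (y ⊗ₜ a))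
  counit_act : ∀ x a : H, counit (R := k) (f (x ⊗ₜ a)) = counit (R := k) x * counit (R := k) a
  comul_act : ∀ (x a : H) (rx : CoalgRepr.{_, _, w1} k x) (ra : CoalgRepr.{_, _, w2} k a),
      comul (R := k) (f (x ⊗ₜ a)) =
        ∑ i ∈ rx.index, ∑ j ∈ ra.index,
          f (rx.left i ⊗ₜ ra.left j) ⊗ₜ[k] f (rx.right i ⊗ₜ ra.right j)

/-- `g` is a right `H`-module coalgebra action of the Hopf algebra `H` on itself. -/
structure IsRightModCoalgAction (g : H ⊗[k] H →ₗ[k] H) : Prop where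
  act_one : ∀ x : H, g (x ⊗ₜ 1) = x
  act_mul : ∀ x a b : H, g (x ⊗ₜ (a * b)) = g (g (x ⊗ₜ a) ⊗ₜ b)
  counit_act : ∀ x a : H, counit (R := k) (g (x ⊗ₜ a)) = counit (R := k) x * counit (R := k) a
  comul_act : ∀ (x a : H) (rx : CoalgRepr.{_, _, w3} k x) (ra : CoalgRepr.{_, _, w4} k a),
      comul (R := k) (g (x ⊗ₜ a)) =
        ∑ i ∈ rx.index, ∑ j ∈ ra.index,
          g (rx.left i ⊗ₜ ra.left j) ⊗ₜ[k] g (rx.right i ⊗ₜ ra.right j)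

/-- `(H, f, g)` (written `(H, ⇀, ↼)`) is a matched pair of actions on the Hopf algebra `H`:
`f` is a left module coalgebra action, `g` a right module coalgebra action, satisfying the
matched pair conditions (MP1)–(MP5) and the extra condition `xy = (x₁ ⇀ y₁)(x₂ ↼ y₂)`. -/
structure IsMatchedPairOfActions (f g : H ⊗[k] H →ₗ[k] H) : Prop where
  left_action : IsLeftModCoalgAction.{w13, w14, _, _} k H f
  right_action : IsRightModCoalgAction.{w15, w16, _, _} k H g
  mp1 : ∀ (x a b : H) (rx : CoalgRepr.{_, _, w5} k x) (ra : CoalgRepr.{_, _, w6} k a),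
      f (x ⊗ₜ (a * b)) =
        ∑ i ∈ rx.index, ∑ j ∈ ra.index,
          f (rx.left i ⊗ₜ ra.left j) * f (g (rx.right i ⊗ₜ ra.right j) ⊗ₜ b)
  mp2 : ∀ x : H, f (x ⊗ₜ 1) = counit (R := k) x • (1 : H)
  mp3 : ∀ (x y a : H) (ry : CoalgRepr.{_, _, w7} k y) (ra : CoalgRepr.{_, _, w8} k a),
      g ((x * y) ⊗ₜ a) =
        ∑ i ∈ ry.index, ∑ j ∈ ra.index,
          g (x ⊗ₜ f (ry.left i ⊗ₜ ra.left j)) * g (ry.right i ⊗ₜ ra.right j)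
  mp4 : ∀ a : H, g ((1 : H) ⊗ₜ a) = counit (R := k) a • (1 : H)
  mp5 : ∀ (x a : H) (rx : CoalgRepr.{_, _, w9} k x) (ra : CoalgRepr.{_, _, w10} k a),
      (∑ i ∈ rx.index, ∑ j ∈ ra.index,
        f (rx.left i ⊗ₜ ra.left j) ⊗ₜ[k] g (rx.right i ⊗ₜ ra.right j)) =
      ∑ i ∈ rx.index, ∑ j ∈ ra.index,
        f (rx.right i ⊗ₜ ra.right j) ⊗ₜ[k] g (rx.left i ⊗ₜ ra.left j)
  mp_mul : ∀ (x y : H) (rx : CoalgRepr.{_, _, w11} k x) (ry : CoalgRepr.{_, _, w12} k y),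
      x * y = ∑ i ∈ rx.index, ∑ j ∈ ry.index,
        f (rx.left i ⊗ₜ ry.left j) * g (rx.right i ⊗ₜ ry.right j)

/-- The braiding operator `r(x ⊗ y) = (x₁ ⇀ y₁) ⊗ (x₂ ↼ y₂)` associated to the pair `(f, g)`. -/
def braidOp (f g : H ⊗[k] H →ₗ[k] H) : H ⊗[k] H →ₗ[k] H ⊗[k] H :=
  TensorProduct.map f g ∘ₗ (tensorTensorTensorComm k H H H H).toLinearMap
    ∘ₗ TensorProduct.map (comul (R := k)) (comul (R := k))


namespace CR

variable {R A : Type*} [CommRing R] [Ring A] [HopfAlgebra R A]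

/-- Conversion to Mathlib's representation. -/
def toRepr {a : A} (r : CoalgRepr R a) : Coalgebra.Repr R a r.ι where
  index := r.index
  left := r.left
  right := r.right
  eq := r.eq

lemma sum_counit_tmul_eq {a : A} (r : CoalgRepr R a) :
    ∑ i ∈ r.index, counit (R := R) (r.left i) ⊗ₜ[R] r.right i = 1 ⊗ₜ[R] a :=
  Coalgebra.sum_counit_tmul_eq (toRepr r)

lemma sum_tmul_counit_eq {a : A} (r : CoalgRepr R a) :
    ∑ i ∈ r.index, r.left i ⊗ₜ[R] counit (R := R) (r.right i) = a ⊗ₜ[R] 1 :=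
  Coalgebra.sum_tmul_counit_eq (toRepr r)

lemma sum_tmul_tmul_eq {a : A} (r : CoalgRepr R a)
    (a₁ : ∀ i, CoalgRepr R (r.left i)) (a₂ : ∀ i, CoalgRepr R (r.right i)) :
    ∑ i ∈ r.index, ∑ j ∈ (a₁ i).index,
      (a₁ i).left j ⊗ₜ[R] ((a₁ i).right j ⊗ₜ[R] r.right i)
      = ∑ i ∈ r.index, ∑ j ∈ (a₂ i).index,
      r.left i ⊗ₜ[R] ((a₂ i).left j ⊗ₜ[R] (a₂ i).right j) :=
  Coalgebra.sum_tmul_tmul_eq (toRepr r) (fun i => toRepr (a₁ i)) (fun i => toRepr (a₂ i))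

lemma sum_antipode_mul_eq_smul {a : A} (r : CoalgRepr R a) :
    ∑ i ∈ r.index, antipode R (r.left i) * r.right i = counit (R := R) a • 1 :=
  HopfAlgebra.sum_antipode_mul_eq_smul (toRepr r)

lemma sum_mul_antipode_eq_smul {a : A} (r : CoalgRepr R a) :
    ∑ i ∈ r.index, r.left i * antipode R (r.right i) = counit (R := R) a • 1 :=
  HopfAlgebra.sum_mul_antipode_eq_smul (toRepr r)

end CR

/-- An arbitrarily chosen representation. -/
def arbRepr (R : Type*) {A : Type*} [CommRing R] [Ring A] [HopfAlgebra R A] (a : A) :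
    CoalgRepr R a where
  index := (Coalgebra.Repr.arbitrary R a).index
  left := (Coalgebra.Repr.arbitrary R a).left
  right := (Coalgebra.Repr.arbitrary R a).right
  eq := (Coalgebra.Repr.arbitrary R a).eq

namespace Stmt11Aux

universe u
variable {k' H' : Type*} [CommRing k'] [Ring H'] [HopfAlgebra k' H']

lemma csl {a : H'} (r : CoalgRepr k' a) :
    ∑ i ∈ r.index, counit (R := k') (r.left i) • r.right i = a := by
  have h : (TensorProduct.lid k' H')
        (∑ i ∈ r.index, counit (R := k') (r.left i) ⊗ₜ[k'] r.right i) =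
      (TensorProduct.lid k' H') ((1 : k') ⊗ₜ[k'] a) := by
    rw [CR.sum_counit_tmul_eq]
  simpa only [map_sum, TensorProduct.lid_tmul, one_smul] using h

lemma csr {a : H'} (r : CoalgRepr k' a) :
    ∑ i ∈ r.index, counit (R := k') (r.right i) • r.left i = a := by
  have h : (TensorProduct.rid k' H')
        (∑ i ∈ r.index, r.left i ⊗ₜ[k'] counit (R := k') (r.right i)) =
      (TensorProduct.rid k' H') (a ⊗ₜ[k'] (1 : k')) := by
    rw [CR.sum_tmul_counit_eq]
  simpa only [map_sum, TensorProduct.rid_tmul, one_smul] using h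

/-- A representation whose index type lives in an arbitrary exact universe. -/
def uRepr {a : H'} (r : CoalgRepr k' a) : CoalgRepr k' a where
  index := (Finset.univ : Finset (ULift.{u, 0} (Fin r.index.card)))
  left := fun p => r.left (r.index.equivFin.symm p.down)
  right := fun p => r.right (r.index.equivFin.symm p.down)
  eq := by
    rw [← r.eq]
    refine (Fintype.sum_equiv (Equiv.ulift.{u, 0}) _
      (fun q => r.left (r.index.equivFin.symm q) ⊗ₜ[k'] r.right (r.index.equivFin.symm q))
      fun p => rfl).trans ?_
    refine (Fintype.sum_equiv r.index.equivFin.symm _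
      (fun i => r.left i.1 ⊗ₜ[k'] r.right i.1) fun q => rfl).trans ?_
    exact Finset.sum_coe_sort r.index fun i => r.left i ⊗ₜ[k'] r.right i

end Stmt11Aux
namespace Stmt11Aux2

variable {k' : Type*} [CommRing k']

section maps
variable {M N P : Type*} [AddCommMonoid M] [AddCommMonoid N] [AddCommMonoid P]
  [Module k' M] [Module k' N] [Module k' P]

lemma map_sum2 (L : M ⊗[k'] N →ₗ[k'] P) {ι₁ ι₃ : Type*}
    (s1 : Finset ι₁) (s2 : Finset ι₃) (A : ι₁ → M) (B : ι₃ → N) :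
    ∑ i ∈ s1, ∑ j ∈ s2, L (A i ⊗ₜ B j) = L ((∑ i ∈ s1, A i) ⊗ₜ (∑ j ∈ s2, B j)) := by
  rw [TensorProduct.sum_tmul, map_sum]
  refine Finset.sum_congr rfl fun i _ => ?_
  rw [TensorProduct.tmul_sum, map_sum]

lemma map_sum3 (L : M ⊗[k'] N →ₗ[k'] P) {ι₁ ι₃ : Type*} {κ : ι₁ → Type*}
    (s1 : Finset ι₁) (t1 : ∀ i, Finset (κ i)) (s2 : Finset ι₃)
    (A : ∀ i, κ i → M) (B : ι₃ → N) :
    ∑ i ∈ s1, ∑ p ∈ t1 i, ∑ j ∈ s2, L (A i p ⊗ₜ B j) =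
      L ((∑ i ∈ s1, ∑ p ∈ t1 i, A i p) ⊗ₜ (∑ j ∈ s2, B j)) := by
  rw [TensorProduct.sum_tmul, map_sum]
  refine Finset.sum_congr rfl fun i _ => ?_
  rw [TensorProduct.sum_tmul, map_sum]
  refine Finset.sum_congr rfl fun p _ => ?_
  rw [TensorProduct.tmul_sum, map_sum]

lemma map_sum4 (L : M ⊗[k'] N →ₗ[k'] P) {ι₁ ι₃ : Type*} {κ : ι₁ → Type*} {μ : ι₃ → Type*}
    (s1 : Finset ι₁) (t1 : ∀ i, Finset (κ i)) (s2 : Finset ι₃) (t2 : ∀ j, Finset (μ j))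
    (A : ∀ i, κ i → M) (B : ∀ j, μ j → N) :
    ∑ i ∈ s1, ∑ p ∈ t1 i, ∑ j ∈ s2, ∑ q ∈ t2 j, L (A i p ⊗ₜ B j q) =
      L ((∑ i ∈ s1, ∑ p ∈ t1 i, A i p) ⊗ₜ (∑ j ∈ s2, ∑ q ∈ t2 j, B j q)) := by
  rw [TensorProduct.sum_tmul, map_sum]
  refine Finset.sum_congr rfl fun i _ => ?_
  rw [TensorProduct.sum_tmul, map_sum]
  refine Finset.sum_congr rfl fun p _ => ?_
  rw [TensorProduct.tmul_sum, map_sum]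
  refine Finset.sum_congr rfl fun j _ => ?_
  rw [TensorProduct.tmul_sum, map_sum]

end maps

variable {H' : Type*} [Ring H'] [HopfAlgebra k' H']

/-- Regrouping (coassociativity) under a 6-linear map, both variables 3-legged. -/
lemma regroup2 (L : (H' ⊗[k'] (H' ⊗[k'] H')) ⊗[k'] (H' ⊗[k'] (H' ⊗[k'] H')) →ₗ[k'] H')
    {x y : H'} (rx : CoalgRepr k' x) (ry : CoalgRepr k' y)
    (rxL : ∀ i, CoalgRepr k' (rx.left i)) (rxR : ∀ i, CoalgRepr k' (rx.right i))
    (ryL : ∀ j, CoalgRepr k' (ry.left j)) (ryR : ∀ j, CoalgRepr k' (ry.right j)) :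
    ∑ i ∈ rx.index, ∑ p ∈ (rxL i).index, ∑ j ∈ ry.index, ∑ q ∈ (ryL j).index,
      L (((rxL i).left p ⊗ₜ ((rxL i).right p ⊗ₜ rx.right i)) ⊗ₜ
         ((ryL j).left q ⊗ₜ ((ryL j).right q ⊗ₜ ry.right j))) =
    ∑ i ∈ rx.index, ∑ p ∈ (rxR i).index, ∑ j ∈ ry.index, ∑ q ∈ (ryR j).index,
      L ((rx.left i ⊗ₜ ((rxR i).left p ⊗ₜ (rxR i).right p)) ⊗ₜ
         (ry.left j ⊗ₜ ((ryR j).left q ⊗ₜ (ryR j).right q))) := by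
  have hx := CR.sum_tmul_tmul_eq rx rxL rxR
  have hy := CR.sum_tmul_tmul_eq ry ryL ryR
  rw [map_sum4 L rx.index (fun i => (rxL i).index) ry.index (fun j => (ryL j).index),
    map_sum4 L rx.index (fun i => (rxR i).index) ry.index (fun j => (ryR j).index),
    hx, hy]

/-- Regrouping under a map; first variable 3-legged, second 2-legged. -/
lemma regroup1 (L : (H' ⊗[k'] (H' ⊗[k'] H')) ⊗[k'] (H' ⊗[k'] H') →ₗ[k'] H')
    {x y : H'} (rx : CoalgRepr k' x) (ry : CoalgRepr k' y)
    (rxL : ∀ i, CoalgRepr k' (rx.left i)) (rxR : ∀ i, CoalgRepr k' (rx.right i)) :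
    ∑ i ∈ rx.index, ∑ p ∈ (rxL i).index, ∑ j ∈ ry.index,
      L (((rxL i).left p ⊗ₜ ((rxL i).right p ⊗ₜ rx.right i)) ⊗ₜ (ry.left j ⊗ₜ ry.right j)) =
    ∑ i ∈ rx.index, ∑ p ∈ (rxR i).index, ∑ j ∈ ry.index,
      L ((rx.left i ⊗ₜ ((rxR i).left p ⊗ₜ (rxR i).right p)) ⊗ₜ (ry.left j ⊗ₜ ry.right j)) := by
  have hx := CR.sum_tmul_tmul_eq rx rxL rxR
  rw [map_sum3 L rx.index (fun i => (rxL i).index) ry.index,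
    map_sum3 L rx.index (fun i => (rxR i).index) ry.index, hx]

end Stmt11Aux2
namespace Stmt11Aux3

variable {k' : Type*} [CommRing k'] {H' : Type*} [Ring H'] [HopfAlgebra k' H']

open TensorProduct LinearMap HopfAlgebra

/-- `a ⊗ b ↦ f (S (f (a ⊗ y)) ⊗ b)` for fixed `y`. -/
def LT (f : H' ⊗[k'] H' →ₗ[k'] H') (y : H') : H' ⊗[k'] H' →ₗ[k'] H' :=
  f ∘ₗ (antipode (R := k') ∘ₗ f ∘ₗ (TensorProduct.mk k' H' H').flip y).rTensor H'

@[simp] lemma LT_apply (f : H' ⊗[k'] H' →ₗ[k'] H') (y a b : H') :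
    LT f y (a ⊗ₜ b) = f (antipode (R := k') (f (a ⊗ₜ y)) ⊗ₜ b) := by
  simp [LT]

lemma LTsum (f : H' ⊗[k'] H' →ₗ[k'] H') (y x : H') (r : CoalgRepr k' x) :
    (∑ i ∈ r.index, f (antipode (R := k') (f (r.left i ⊗ₜ y)) ⊗ₜ r.right i)) =
      LT f y (comul (R := k') x) := by
  rw [← r.eq, map_sum]
  exact Finset.sum_congr rfl fun i _ => (LT_apply f y _ _).symm

def L3 (f g : H' ⊗[k'] H' →ₗ[k'] H') :
    (H' ⊗[k'] (H' ⊗[k'] H')) ⊗[k'] (H' ⊗[k'] (H' ⊗[k'] H')) →ₗ[k'] H' :=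
  f ∘ₗ (mul' k' H').rTensor H' ∘ₗ (TensorProduct.assoc k' H' H' H').symm.toLinearMap
    ∘ₗ TensorProduct.map (antipode (R := k') ∘ₗ f)
        (TensorProduct.map f g ∘ₗ (tensorTensorTensorComm k' H' H' H' H').toLinearMap)
    ∘ₗ (tensorTensorTensorComm k' H' (H' ⊗[k'] H') H' (H' ⊗[k'] H')).toLinearMap

@[simp] lemma L3_apply (f g : H' ⊗[k'] H' →ₗ[k'] H') (a b c d e h' : H') :
    L3 f g ((a ⊗ₜ (b ⊗ₜ c)) ⊗ₜ (d ⊗ₜ (e ⊗ₜ h'))) =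
      f ((antipode (R := k') (f (a ⊗ₜ d)) * f (b ⊗ₜ e)) ⊗ₜ g (c ⊗ₜ h')) := by
  simp [L3, mul'_apply]

def L6 (f g : H' ⊗[k'] H' →ₗ[k'] H') :
    (H' ⊗[k'] (H' ⊗[k'] H')) ⊗[k'] (H' ⊗[k'] (H' ⊗[k'] H')) →ₗ[k'] H' :=
  f ∘ₗ (antipode (R := k') ∘ₗ f).rTensor H'
    ∘ₗ (TensorProduct.assoc k' H' H' H').symm.toLinearMap
    ∘ₗ TensorProduct.map f (TensorProduct.map g f)
    ∘ₗ ((tensorTensorTensorComm k' H' H' H' H').toLinearMap.lTensor (H' ⊗[k'] H'))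
    ∘ₗ (tensorTensorTensorComm k' H' (H' ⊗[k'] H') H' (H' ⊗[k'] H')).toLinearMap

@[simp] lemma L6_apply (f g : H' ⊗[k'] H' →ₗ[k'] H') (a b c d e h' : H') :
    L6 f g ((a ⊗ₜ (b ⊗ₜ c)) ⊗ₜ (d ⊗ₜ (e ⊗ₜ h'))) =
      f (antipode (R := k') (f (f (a ⊗ₜ d) ⊗ₜ g (b ⊗ₜ e))) ⊗ₜ f (c ⊗ₜ h')) := by
  simp [L6]

def L5 (f g : H' ⊗[k'] H' →ₗ[k'] H') :
    (H' ⊗[k'] (H' ⊗[k'] H')) ⊗[k'] (H' ⊗[k'] (H' ⊗[k'] H')) →ₗ[k'] H' :=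
  L6 f g ∘ₗ TensorProduct.map ((TensorProduct.comm k' H' H').toLinearMap.lTensor H')
      ((TensorProduct.comm k' H' H').toLinearMap.lTensor H')

@[simp] lemma L5_apply (f g : H' ⊗[k'] H' →ₗ[k'] H') (a b c d e h' : H') :
    L5 f g ((a ⊗ₜ (b ⊗ₜ c)) ⊗ₜ (d ⊗ₜ (e ⊗ₜ h'))) =
      f (antipode (R := k') (f (f (a ⊗ₜ d) ⊗ₜ g (c ⊗ₜ h'))) ⊗ₜ f (b ⊗ₜ e)) := by
  simp [L5]

def L2 (f : H' ⊗[k'] H' →ₗ[k'] H') :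
    (H' ⊗[k'] (H' ⊗[k'] H')) ⊗[k'] (H' ⊗[k'] H') →ₗ[k'] H' :=
  f ∘ₗ (mul' k' H').rTensor H' ∘ₗ (TensorProduct.assoc k' H' H' H').symm.toLinearMap
    ∘ₗ TensorProduct.map f
        ((antipode (R := k') ∘ₗ f).rTensor H'
          ∘ₗ (TensorProduct.assoc k' H' H' H').symm.toLinearMap
          ∘ₗ (TensorProduct.comm k' H' H').toLinearMap.lTensor H'
          ∘ₗ (TensorProduct.assoc k' H' H' H').toLinearMap)
    ∘ₗ (tensorTensorTensorComm k' H' (H' ⊗[k'] H') H' H').toLinearMap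

@[simp] lemma L2_apply (f : H' ⊗[k'] H' →ₗ[k'] H') (a b c u v : H') :
    L2 f ((a ⊗ₜ (b ⊗ₜ c)) ⊗ₜ (u ⊗ₜ v)) =
      f ((f (a ⊗ₜ u) * antipode (R := k') (f (b ⊗ₜ v))) ⊗ₜ c) := by
  simp [L2, mul'_apply]

/-- `u ⊗ v ↦ f (S (f (c ⊗ v)) ⊗ u)` for fixed `c`. -/
def Phi (f : H' ⊗[k'] H' →ₗ[k'] H') (c : H') : H' ⊗[k'] H' →ₗ[k'] H' :=
  f ∘ₗ (TensorProduct.comm k' H' H').toLinearMap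
    ∘ₗ (antipode (R := k') ∘ₗ f ∘ₗ TensorProduct.mk k' H' H' c).lTensor H'

@[simp] lemma Phi_apply (f : H' ⊗[k'] H' →ₗ[k'] H') (c u v : H') :
    Phi f c (u ⊗ₜ v) = f (antipode (R := k') (f (c ⊗ₜ v)) ⊗ₜ u) := by
  simp [Phi]

end Stmt11Aux3
namespace Stmt11Aux4
open Stmt11Aux Stmt11Aux2

variable {k' H' : Type*} [CommRing k'] [Ring H'] [HopfAlgebra k' H']

lemma repr_sum {M : Type*} [AddCommMonoid M] [Module k' M]
    (Ψ : H' ⊗[k'] H' →ₗ[k'] M) {x : H'} (r : CoalgRepr k' x) :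
    ∑ i ∈ r.index, Ψ (r.left i ⊗ₜ r.right i) = Ψ (comul (R := k') x) := by
  rw [← r.eq, map_sum]

lemma bridgeFG (F G : H' ⊗[k'] H' →ₗ[k'] H') {x a : H'}
    (rx : CoalgRepr k' x) (ra : CoalgRepr k' a) :
    (∑ i ∈ rx.index, ∑ j ∈ ra.index,
        F (rx.left i ⊗ₜ ra.left j) ⊗ₜ[k'] G (rx.right i ⊗ₜ ra.right j)) =
      (TensorProduct.map F G ∘ₗ (tensorTensorTensorComm k' H' H' H' H').toLinearMap)
        ((comul (R := k') x) ⊗ₜ (comul (R := k') a)) := by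
  rw [← rx.eq, ← ra.eq,
    ← map_sum2 (TensorProduct.map F G ∘ₗ (tensorTensorTensorComm k' H' H' H' H').toLinearMap)
      rx.index ra.index (fun i => rx.left i ⊗ₜ rx.right i) (fun j => ra.left j ⊗ₜ ra.right j)]
  refine Finset.sum_congr rfl fun i _ => Finset.sum_congr rfl fun j _ => ?_
  simp

lemma bridgeFG' (F G : H' ⊗[k'] H' →ₗ[k'] H') {x a : H'}
    (rx : CoalgRepr k' x) (ra : CoalgRepr k' a) :
    (∑ i ∈ rx.index, ∑ j ∈ ra.index,
        F (rx.right i ⊗ₜ ra.right j) ⊗ₜ[k'] G (rx.left i ⊗ₜ ra.left j)) =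
      (TensorProduct.map F G ∘ₗ (tensorTensorTensorComm k' H' H' H' H').toLinearMap
          ∘ₗ TensorProduct.map (TensorProduct.comm k' H' H').toLinearMap
              (TensorProduct.comm k' H' H').toLinearMap)
        ((comul (R := k') x) ⊗ₜ (comul (R := k') a)) := by
  rw [← rx.eq, ← ra.eq,
    ← map_sum2 (TensorProduct.map F G ∘ₗ (tensorTensorTensorComm k' H' H' H' H').toLinearMap
      ∘ₗ TensorProduct.map (TensorProduct.comm k' H' H').toLinearMap
          (TensorProduct.comm k' H' H').toLinearMap)
      rx.index ra.index (fun i => rx.left i ⊗ₜ rx.right i) (fun j => ra.left j ⊗ₜ ra.right j)]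
  refine Finset.sum_congr rfl fun i _ => Finset.sum_congr rfl fun j _ => ?_
  simp

lemma bridgeKFG (K F G : H' ⊗[k'] H' →ₗ[k'] H') {x a : H'}
    (rx : CoalgRepr k' x) (ra : CoalgRepr k' a) :
    (∑ i ∈ rx.index, ∑ j ∈ ra.index,
        K (F (rx.left i ⊗ₜ ra.left j) ⊗ₜ G (rx.right i ⊗ₜ ra.right j))) =
      (K ∘ₗ TensorProduct.map F G ∘ₗ (tensorTensorTensorComm k' H' H' H' H').toLinearMap)
        ((comul (R := k') x) ⊗ₜ (comul (R := k') a)) := by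
  rw [← rx.eq, ← ra.eq,
    ← map_sum2 (K ∘ₗ TensorProduct.map F G
        ∘ₗ (tensorTensorTensorComm k' H' H' H' H').toLinearMap)
      rx.index ra.index (fun i => rx.left i ⊗ₜ rx.right i) (fun j => ra.left j ⊗ₜ ra.right j)]
  refine Finset.sum_congr rfl fun i _ => Finset.sum_congr rfl fun j _ => ?_
  simp

end Stmt11Aux4
namespace Stmt11Aux5
open Stmt11Aux Stmt11Aux2 Stmt11Aux3 Stmt11Aux4

variable {k' H' : Type*} [CommRing k'] [Ring H'] [HopfAlgebra k' H']
variable {f g : H' ⊗[k'] H' →ₗ[k'] H'}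

/-- Universe-polymorphic version of `comul_act`. -/
lemma comul_act_poly (hf : IsLeftModCoalgAction k' H' f) (x a : H')
    (rx : CoalgRepr k' x) (ra : CoalgRepr k' a) :
    comul (R := k') (f (x ⊗ₜ a)) =
      ∑ i ∈ rx.index, ∑ j ∈ ra.index,
        f (rx.left i ⊗ₜ ra.left j) ⊗ₜ[k'] f (rx.right i ⊗ₜ ra.right j) := by
  rw [bridgeFG f f rx ra]
  exact (hf.comul_act x a (uRepr (arbRepr k' x))
      (uRepr (arbRepr k' a))).trans
    (bridgeFG f f (uRepr (arbRepr k' x))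
      (uRepr (arbRepr k' a)))

/-- Universe-polymorphic version of `mp5`. -/
lemma mp5_poly (h : IsMatchedPairOfActions k' H' f g) (x a : H')
    (rx : CoalgRepr k' x) (ra : CoalgRepr k' a) :
    (∑ i ∈ rx.index, ∑ j ∈ ra.index,
        f (rx.left i ⊗ₜ ra.left j) ⊗ₜ[k'] g (rx.right i ⊗ₜ ra.right j)) =
      ∑ i ∈ rx.index, ∑ j ∈ ra.index,
        f (rx.right i ⊗ₜ ra.right j) ⊗ₜ[k'] g (rx.left i ⊗ₜ ra.left j) := by
  rw [bridgeFG f g rx ra, bridgeFG' f g rx ra,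
    ← bridgeFG f g (uRepr (arbRepr k' x))
      (uRepr (arbRepr k' a)),
    ← bridgeFG' f g (uRepr (arbRepr k' x))
      (uRepr (arbRepr k' a))]
  exact h.mp5 x a (uRepr (arbRepr k' x))
    (uRepr (arbRepr k' a))

/-- A representation of `f (x ⊗ₜ a)` built from `comul_act`. -/
def fRepr (hf : IsLeftModCoalgAction k' H' f) {x a : H'}
    (rx : CoalgRepr k' x) (ra : CoalgRepr k' a) :
    CoalgRepr k' (f (x ⊗ₜ a)) where
  index := rx.index ×ˢ ra.index
  left := fun p => f (rx.left p.1 ⊗ₜ ra.left p.2)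
  right := fun p => f (rx.right p.1 ⊗ₜ ra.right p.2)
  eq := by rw [Finset.sum_product]; exact (comul_act_poly hf x a rx ra).symm

end Stmt11Aux5
namespace Stmt11Fwd
open Stmt11Aux Stmt11Aux2 Stmt11Aux3 Stmt11Aux4 Stmt11Aux5

variable {k : Type*} {H : Type*} [CommRing k] [Ring H] [HopfAlgebra k H]

lemma forward {f g : H ⊗[k] H →ₗ[k] H} (h : IsMatchedPairOfActions k H f g)
    (cond : ∀ (x y : H) (rx : CoalgRepr k x) (ry : CoalgRepr k y),
      (∑ i ∈ rx.index, ∑ j ∈ ry.index,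
          f (f (rx.left i ⊗ₜ ry.left j) ⊗ₜ g (rx.right i ⊗ₜ ry.right j))) =
        counit (R := k) y • x ∧
      (∑ i ∈ rx.index, ∑ j ∈ ry.index,
          g (f (rx.left i ⊗ₜ ry.left j) ⊗ₜ g (rx.right i ⊗ₜ ry.right j))) =
        counit (R := k) x • y)
    (x y : H) (rx0 : CoalgRepr k x) :
    g (x ⊗ₜ y) =
      ∑ i ∈ rx0.index, f (antipode (R := k) (f (rx0.left i ⊗ₜ y)) ⊗ₜ rx0.right i) := by
  have Tsum : ∀ (rx : CoalgRepr k x),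
      (∑ i ∈ rx.index, f (antipode (R := k) (f (rx.left i ⊗ₜ y)) ⊗ₜ rx.right i)) =
        LT f y (comul (R := k) x) := by
    intro rx
    rw [← rx.eq, map_sum]
    exact Finset.sum_congr rfl fun i _ => (LT_apply f y _ _).symm
  rw [Tsum rx0]
  clear rx0
  have rx : CoalgRepr k x := arbRepr k x
  have ry : CoalgRepr k y := arbRepr k y
  have rxL : ∀ i, CoalgRepr k (rx.left i) := fun i => arbRepr k _
  have rxR : ∀ i, CoalgRepr k (rx.right i) := fun i => arbRepr k _
  have ryL : ∀ j, CoalgRepr k (ry.left j) := fun j => arbRepr k _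
  have ryR : ∀ j, CoalgRepr k (ry.right j) := fun j => arbRepr k _
  calc g (x ⊗ₜ y)
      = ∑ i ∈ rx.index, ∑ j ∈ ry.index,
          (counit (R := k) (rx.left i) * counit (R := k) (ry.left j)) •
            g (rx.right i ⊗ₜ ry.right j) := by
        conv_lhs => rw [← csl rx, ← csl ry]
        rw [TensorProduct.sum_tmul, map_sum]
        refine Finset.sum_congr rfl fun i _ => ?_
        rw [TensorProduct.tmul_sum, map_sum]
        refine Finset.sum_congr rfl fun j _ => ?_
        rw [TensorProduct.tmul_smul, ← TensorProduct.smul_tmul', map_smul, map_smul,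
          mul_comm, mul_smul]
    _ = ∑ i ∈ rx.index, ∑ j ∈ ry.index,
          f ((∑ p ∈ (rxL i).index, ∑ q ∈ (ryL j).index,
              antipode (R := k) (f ((rxL i).left p ⊗ₜ (ryL j).left q)) *
                f ((rxL i).right p ⊗ₜ (ryL j).right q)) ⊗ₜ
            g (rx.right i ⊗ₜ ry.right j)) := by
        refine Finset.sum_congr rfl fun i _ => Finset.sum_congr rfl fun j _ => ?_
        have h0 := CR.sum_antipode_mul_eq_smul (R := k)
          (fRepr h.left_action (rxL i) (ryL j))
        rw [h.left_action.counit_act] at h0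
        have hrep : ∑ p ∈ (rxL i).index, ∑ q ∈ (ryL j).index,
            antipode (R := k) (f ((rxL i).left p ⊗ₜ (ryL j).left q)) *
              f ((rxL i).right p ⊗ₜ (ryL j).right q) =
            (counit (R := k) (rx.left i) * counit (R := k) (ry.left j)) • (1 : H) :=
          (Finset.sum_product ((rxL i).index) ((ryL j).index) (f := fun p =>
            antipode (R := k) (f ((rxL i).left p.1 ⊗ₜ (ryL j).left p.2)) *
              f ((rxL i).right p.1 ⊗ₜ (ryL j).right p.2))).symm.trans h0
        rw [hrep, ← TensorProduct.smul_tmul', map_smul, h.left_action.one_act]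
    _ = ∑ i ∈ rx.index, ∑ p ∈ (rxL i).index, ∑ j ∈ ry.index, ∑ q ∈ (ryL j).index,
          L3 f g (((rxL i).left p ⊗ₜ ((rxL i).right p ⊗ₜ rx.right i)) ⊗ₜ
            ((ryL j).left q ⊗ₜ ((ryL j).right q ⊗ₜ ry.right j))) := by
        refine Finset.sum_congr rfl fun i _ => ?_
        rw [← Finset.sum_comm]
        refine Finset.sum_congr rfl fun j _ => ?_
        rw [TensorProduct.sum_tmul, map_sum]
        refine Finset.sum_congr rfl fun p _ => ?_
        rw [TensorProduct.sum_tmul, map_sum]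
        refine Finset.sum_congr rfl fun q _ => ?_
        rw [L3_apply]
    _ = ∑ i ∈ rx.index, ∑ p ∈ (rxR i).index, ∑ j ∈ ry.index, ∑ q ∈ (ryR j).index,
          L3 f g ((rx.left i ⊗ₜ ((rxR i).left p ⊗ₜ (rxR i).right p)) ⊗ₜ
            (ry.left j ⊗ₜ ((ryR j).left q ⊗ₜ (ryR j).right q))) :=
        regroup2 (L3 f g) rx ry rxL rxR ryL ryR
    _ = ∑ i ∈ rx.index, ∑ j ∈ ry.index,
          f (antipode (R := k) (f (rx.left i ⊗ₜ ry.left j)) ⊗ₜ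
            (counit (R := k) (ry.right j) • rx.right i)) := by
        refine Finset.sum_congr rfl fun i _ => ?_
        rw [Finset.sum_comm]
        refine Finset.sum_congr rfl fun j _ => ?_
        have hc : ∑ p ∈ (rxR i).index, ∑ q ∈ (ryR j).index,
            f (f ((rxR i).left p ⊗ₜ (ryR j).left q) ⊗ₜ
              g ((rxR i).right p ⊗ₜ (ryR j).right q)) =
            counit (R := k) (ry.right j) • rx.right i := by
          rw [bridgeKFG f f g (rxR i) (ryR j),
            ← bridgeKFG f f g (uRepr (arbRepr k (rx.right i)))
              (uRepr (arbRepr k (ry.right j)))]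
          exact (cond _ _ (uRepr (arbRepr k (rx.right i)))
            (uRepr (arbRepr k (ry.right j)))).1
        calc ∑ p ∈ (rxR i).index, ∑ q ∈ (ryR j).index,
              L3 f g ((rx.left i ⊗ₜ ((rxR i).left p ⊗ₜ (rxR i).right p)) ⊗ₜ
                (ry.left j ⊗ₜ ((ryR j).left q ⊗ₜ (ryR j).right q)))
            = ∑ p ∈ (rxR i).index, ∑ q ∈ (ryR j).index,
              f (antipode (R := k) (f (rx.left i ⊗ₜ ry.left j)) ⊗ₜ
                f (f ((rxR i).left p ⊗ₜ (ryR j).left q) ⊗ₜ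
                  g ((rxR i).right p ⊗ₜ (ryR j).right q))) := by
              refine Finset.sum_congr rfl fun p _ => Finset.sum_congr rfl fun q _ => ?_
              rw [L3_apply, h.left_action.mul_act]
          _ = f (antipode (R := k) (f (rx.left i ⊗ₜ ry.left j)) ⊗ₜ
                (∑ p ∈ (rxR i).index, ∑ q ∈ (ryR j).index,
                  f (f ((rxR i).left p ⊗ₜ (ryR j).left q) ⊗ₜ
                    g ((rxR i).right p ⊗ₜ (ryR j).right q)))) := by
              rw [TensorProduct.tmul_sum, map_sum]
              refine Finset.sum_congr rfl fun p _ => ?_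
              rw [TensorProduct.tmul_sum, map_sum]
          _ = f (antipode (R := k) (f (rx.left i ⊗ₜ ry.left j)) ⊗ₜ
                (counit (R := k) (ry.right j) • rx.right i)) := by rw [hc]
    _ = ∑ i ∈ rx.index, f (antipode (R := k) (f (rx.left i ⊗ₜ y)) ⊗ₜ rx.right i) := by
        refine Finset.sum_congr rfl fun i _ => ?_
        conv_rhs => rw [← csr ry]
        simp only [TensorProduct.tmul_sum, TensorProduct.tmul_smul, map_sum, map_smul,
          ← TensorProduct.smul_tmul', TensorProduct.sum_tmul]
    _ = LT f y (comul (R := k) x) := by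
        rw [← rx.eq, map_sum]
        exact Finset.sum_congr rfl fun i _ => (LT_apply f y _ _).symm

end Stmt11Fwd
namespace Stmt11Back
open Stmt11Aux Stmt11Aux2 Stmt11Aux3 Stmt11Aux4 Stmt11Aux5

variable {k : Type*} {H : Type*} [CommRing k] [Ring H] [HopfAlgebra k H]

lemma h2poly {f g : H ⊗[k] H →ₗ[k] H}
    (h2 : ∀ (x y : H) (rx : CoalgRepr k x),
      g (x ⊗ₜ y) =
        ∑ i ∈ rx.index, f (antipode (R := k) (f (rx.left i ⊗ₜ y)) ⊗ₜ rx.right i))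
    (x y : H) (rx : CoalgRepr k x) :
    g (x ⊗ₜ y) =
      ∑ i ∈ rx.index, f (antipode (R := k) (f (rx.left i ⊗ₜ y)) ⊗ₜ rx.right i) := by
  refine (h2 x y (uRepr (arbRepr k x))).trans
    ((LTsum f y x _).trans (LTsum f y x rx).symm)

lemma backA {f g : H ⊗[k] H →ₗ[k] H} (h : IsMatchedPairOfActions k H f g)
    (h2 : ∀ (x y : H) (rx : CoalgRepr k x),
      g (x ⊗ₜ y) =
        ∑ i ∈ rx.index, f (antipode (R := k) (f (rx.left i ⊗ₜ y)) ⊗ₜ rx.right i))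
    (x y : H) (rx : CoalgRepr k x) (ry : CoalgRepr k y) :
    (∑ i ∈ rx.index, ∑ j ∈ ry.index,
        f (f (rx.left i ⊗ₜ ry.left j) ⊗ₜ g (rx.right i ⊗ₜ ry.right j))) =
      counit (R := k) y • x := by
  have rxL : ∀ i, CoalgRepr k (rx.left i) := fun i => arbRepr k _
  have rxR : ∀ i, CoalgRepr k (rx.right i) := fun i => arbRepr k _
  calc ∑ i ∈ rx.index, ∑ j ∈ ry.index,
        f (f (rx.left i ⊗ₜ ry.left j) ⊗ₜ g (rx.right i ⊗ₜ ry.right j))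
      = ∑ i ∈ rx.index, ∑ j ∈ ry.index, ∑ p ∈ (rxR i).index,
          f ((f (rx.left i ⊗ₜ ry.left j) *
              antipode (R := k) (f ((rxR i).left p ⊗ₜ ry.right j))) ⊗ₜ (rxR i).right p) := by
        refine Finset.sum_congr rfl fun i _ => Finset.sum_congr rfl fun j _ => ?_
        rw [h2poly h2 (rx.right i) (ry.right j) (rxR i), TensorProduct.tmul_sum, map_sum]
        exact Finset.sum_congr rfl fun p _ => (h.left_action.mul_act _ _ _).symm
    _ = ∑ i ∈ rx.index, ∑ p ∈ (rxR i).index, ∑ j ∈ ry.index,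
          L2 f ((rx.left i ⊗ₜ ((rxR i).left p ⊗ₜ (rxR i).right p)) ⊗ₜ
            (ry.left j ⊗ₜ ry.right j)) := by
        refine Finset.sum_congr rfl fun i _ => ?_
        rw [← Finset.sum_comm]
        exact Finset.sum_congr rfl fun j _ => Finset.sum_congr rfl fun p _ =>
          (L2_apply f _ _ _ _ _).symm
    _ = ∑ i ∈ rx.index, ∑ p ∈ (rxL i).index, ∑ j ∈ ry.index,
          L2 f (((rxL i).left p ⊗ₜ ((rxL i).right p ⊗ₜ rx.right i)) ⊗ₜ
            (ry.left j ⊗ₜ ry.right j)) :=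
        (regroup1 (L2 f) rx ry rxL rxR).symm
    _ = ∑ i ∈ rx.index,
          f (((counit (R := k) (rx.left i) * counit (R := k) y) • (1 : H)) ⊗ₜ rx.right i) := by
        refine Finset.sum_congr rfl fun i _ => ?_
        have h0 := CR.sum_mul_antipode_eq_smul (R := k)
          (fRepr h.left_action (rxL i) ry)
        rw [h.left_action.counit_act] at h0
        have hrep : ∑ p ∈ (rxL i).index, ∑ j ∈ ry.index,
            f ((rxL i).left p ⊗ₜ ry.left j) *
              antipode (R := k) (f ((rxL i).right p ⊗ₜ ry.right j)) =
            (counit (R := k) (rx.left i) * counit (R := k) y) • (1 : H) :=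
          (Finset.sum_product ((rxL i).index) (ry.index) (f := fun p =>
            f ((rxL i).left p.1 ⊗ₜ ry.left p.2) *
              antipode (R := k) (f ((rxL i).right p.1 ⊗ₜ ry.right p.2)))).symm.trans h0
        rw [← hrep, TensorProduct.sum_tmul, map_sum]
        refine Finset.sum_congr rfl fun p _ => ?_
        rw [TensorProduct.sum_tmul, map_sum]
        exact Finset.sum_congr rfl fun j _ => by rw [L2_apply]
    _ = counit (R := k) y • x := by
        have e2 : ∀ i, f (((counit (R := k) (rx.left i) * counit (R := k) y) • (1 : H)) ⊗ₜ
            rx.right i) = counit (R := k) y • (counit (R := k) (rx.left i) • rx.right i) :=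
          fun i => by
            rw [← TensorProduct.smul_tmul', map_smul, h.left_action.one_act,
              mul_comm, mul_smul]
        rw [Finset.sum_congr rfl fun i _ => e2 i, ← Finset.smul_sum, csl rx]

lemma backB {f g : H ⊗[k] H →ₗ[k] H} (h : IsMatchedPairOfActions k H f g)
    (h2 : ∀ (x y : H) (rx : CoalgRepr k x),
      g (x ⊗ₜ y) =
        ∑ i ∈ rx.index, f (antipode (R := k) (f (rx.left i ⊗ₜ y)) ⊗ₜ rx.right i))
    (x y : H) (rx : CoalgRepr k x) (ry : CoalgRepr k y) :
    (∑ i ∈ rx.index, ∑ j ∈ ry.index,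
        g (f (rx.left i ⊗ₜ ry.left j) ⊗ₜ g (rx.right i ⊗ₜ ry.right j))) =
      counit (R := k) x • y := by
  have rxL : ∀ i, CoalgRepr k (rx.left i) := fun i => arbRepr k _
  have rxR : ∀ i, CoalgRepr k (rx.right i) := fun i => arbRepr k _
  have ryL : ∀ j, CoalgRepr k (ry.left j) := fun j => arbRepr k _
  have ryR : ∀ j, CoalgRepr k (ry.right j) := fun j => arbRepr k _
  calc ∑ i ∈ rx.index, ∑ j ∈ ry.index,
        g (f (rx.left i ⊗ₜ ry.left j) ⊗ₜ g (rx.right i ⊗ₜ ry.right j))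
      = ∑ i ∈ rx.index, ∑ p ∈ (rxL i).index, ∑ j ∈ ry.index, ∑ q ∈ (ryL j).index,
          L5 f g (((rxL i).left p ⊗ₜ ((rxL i).right p ⊗ₜ rx.right i)) ⊗ₜ
            ((ryL j).left q ⊗ₜ ((ryL j).right q ⊗ₜ ry.right j))) := by
        refine Finset.sum_congr rfl fun i _ => ?_
        rw [← Finset.sum_comm]
        refine Finset.sum_congr rfl fun j _ => ?_
        have e1 : g (f (rx.left i ⊗ₜ ry.left j) ⊗ₜ g (rx.right i ⊗ₜ ry.right j)) =
            ∑ p ∈ (rxL i).index, ∑ q ∈ (ryL j).index,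
              f (antipode (R := k)
                  (f (f ((rxL i).left p ⊗ₜ (ryL j).left q) ⊗ₜ
                    g (rx.right i ⊗ₜ ry.right j))) ⊗ₜ
                f ((rxL i).right p ⊗ₜ (ryL j).right q)) :=
          (h2poly h2 _ _ (fRepr h.left_action (rxL i) (ryL j))).trans
            (Finset.sum_product ((rxL i).index) ((ryL j).index) (f := fun p =>
              f (antipode (R := k)
                  (f (f ((rxL i).left p.1 ⊗ₜ (ryL j).left p.2) ⊗ₜ
                    g (rx.right i ⊗ₜ ry.right j))) ⊗ₜ
                f ((rxL i).right p.1 ⊗ₜ (ryL j).right p.2))))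
        rw [e1]
        exact Finset.sum_congr rfl fun p _ => Finset.sum_congr rfl fun q _ =>
          (L5_apply f g _ _ _ _ _ _).symm
    _ = ∑ i ∈ rx.index, ∑ p ∈ (rxR i).index, ∑ j ∈ ry.index, ∑ q ∈ (ryR j).index,
          L5 f g ((rx.left i ⊗ₜ ((rxR i).left p ⊗ₜ (rxR i).right p)) ⊗ₜ
            (ry.left j ⊗ₜ ((ryR j).left q ⊗ₜ (ryR j).right q))) :=
        regroup2 (L5 f g) rx ry rxL rxR ryL ryR
    _ = ∑ i ∈ rx.index, ∑ p ∈ (rxR i).index, ∑ j ∈ ry.index, ∑ q ∈ (ryR j).index,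
          L6 f g ((rx.left i ⊗ₜ ((rxR i).left p ⊗ₜ (rxR i).right p)) ⊗ₜ
            (ry.left j ⊗ₜ ((ryR j).left q ⊗ₜ (ryR j).right q))) := by
        refine Finset.sum_congr rfl fun i _ => ?_
        rw [Finset.sum_comm]
        conv_rhs => rw [Finset.sum_comm]
        refine Finset.sum_congr rfl fun j _ => ?_
        have hswap := congrArg (Phi f (f (rx.left i ⊗ₜ ry.left j)))
          (mp5_poly h (rx.right i) (ry.right j) (rxR i) (ryR j))
        simp only [map_sum, Phi_apply] at hswap
        calc ∑ p ∈ (rxR i).index, ∑ q ∈ (ryR j).index,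
              L5 f g ((rx.left i ⊗ₜ ((rxR i).left p ⊗ₜ (rxR i).right p)) ⊗ₜ
                (ry.left j ⊗ₜ ((ryR j).left q ⊗ₜ (ryR j).right q)))
            = ∑ p ∈ (rxR i).index, ∑ q ∈ (ryR j).index,
              f (antipode (R := k) (f (f (rx.left i ⊗ₜ ry.left j) ⊗ₜ
                g ((rxR i).right p ⊗ₜ (ryR j).right q))) ⊗ₜ
                f ((rxR i).left p ⊗ₜ (ryR j).left q)) :=
              Finset.sum_congr rfl fun p _ => Finset.sum_congr rfl fun q _ =>
                L5_apply f g _ _ _ _ _ _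
          _ = ∑ p ∈ (rxR i).index, ∑ q ∈ (ryR j).index,
              f (antipode (R := k) (f (f (rx.left i ⊗ₜ ry.left j) ⊗ₜ
                g ((rxR i).left p ⊗ₜ (ryR j).left q))) ⊗ₜ
                f ((rxR i).right p ⊗ₜ (ryR j).right q)) := hswap
          _ = ∑ p ∈ (rxR i).index, ∑ q ∈ (ryR j).index,
              L6 f g ((rx.left i ⊗ₜ ((rxR i).left p ⊗ₜ (rxR i).right p)) ⊗ₜ
                (ry.left j ⊗ₜ ((ryR j).left q ⊗ₜ (ryR j).right q))) :=
              Finset.sum_congr rfl fun p _ => Finset.sum_congr rfl fun q _ =>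
                (L6_apply f g _ _ _ _ _ _).symm
    _ = ∑ i ∈ rx.index, ∑ p ∈ (rxL i).index, ∑ j ∈ ry.index, ∑ q ∈ (ryL j).index,
          L6 f g (((rxL i).left p ⊗ₜ ((rxL i).right p ⊗ₜ rx.right i)) ⊗ₜ
            ((ryL j).left q ⊗ₜ ((ryL j).right q ⊗ₜ ry.right j))) :=
        (regroup2 (L6 f g) rx ry rxL rxR ryL ryR).symm
    _ = ∑ i ∈ rx.index, ∑ j ∈ ry.index, counit (R := k) (ry.left j) •
          f (antipode (R := k) (rx.left i) ⊗ₜ f (rx.right i ⊗ₜ ry.right j)) := by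
        refine Finset.sum_congr rfl fun i _ => ?_
        rw [← Finset.sum_comm]
        refine Finset.sum_congr rfl fun j _ => ?_
        have hA := backA h h2 (rx.left i) (ry.left j) (rxL i) (ryL j)
        calc ∑ p ∈ (rxL i).index, ∑ q ∈ (ryL j).index,
              L6 f g (((rxL i).left p ⊗ₜ ((rxL i).right p ⊗ₜ rx.right i)) ⊗ₜ
                ((ryL j).left q ⊗ₜ ((ryL j).right q ⊗ₜ ry.right j)))
            = f (antipode (R := k) (∑ p ∈ (rxL i).index, ∑ q ∈ (ryL j).index,
                f (f ((rxL i).left p ⊗ₜ (ryL j).left q) ⊗ₜ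
                  g ((rxL i).right p ⊗ₜ (ryL j).right q))) ⊗ₜ
                f (rx.right i ⊗ₜ ry.right j)) := by
              rw [map_sum, TensorProduct.sum_tmul, map_sum]
              refine Finset.sum_congr rfl fun p _ => ?_
              rw [map_sum, TensorProduct.sum_tmul, map_sum]
              exact Finset.sum_congr rfl fun q _ => by rw [L6_apply]
          _ = counit (R := k) (ry.left j) •
                f (antipode (R := k) (rx.left i) ⊗ₜ f (rx.right i ⊗ₜ ry.right j)) := by
              rw [hA, map_smul, ← TensorProduct.smul_tmul', map_smul]
    _ = ∑ i ∈ rx.index, f (antipode (R := k) (rx.left i) ⊗ₜ f (rx.right i ⊗ₜ y)) := by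
        refine Finset.sum_congr rfl fun i _ => ?_
        conv_rhs => rw [← csl ry]
        simp only [TensorProduct.tmul_sum, TensorProduct.tmul_smul, map_sum, map_smul]
    _ = f ((∑ i ∈ rx.index, antipode (R := k) (rx.left i) * rx.right i) ⊗ₜ y) := by
        rw [TensorProduct.sum_tmul, map_sum]
        exact Finset.sum_congr rfl fun i _ => (h.left_action.mul_act _ _ _).symm
    _ = counit (R := k) x • y := by
        rw [CR.sum_antipode_mul_eq_smul (R := k) rx, ← TensorProduct.smul_tmul',
          map_smul, h.left_action.one_act]

end Stmt11Back
/-- The conditions `(x₁ ⇀ y₁) ⇀ (x₂ ↼ y₂) = ε(y)x ∧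
(x₁ ⇀ y₁) ↼ (x₂ ↼ y₂) = ε(x)y` and `x ↼ y = S(x₁ ⇀ y) ⇀ x₂` are equivalent. -/
theorem stmt11 (f g : H ⊗[k] H →ₗ[k] H) (h : IsMatchedPairOfActions k H f g) :
    (∀ (x y : H) (rx : CoalgRepr k x) (ry : CoalgRepr k y),
      (∑ i ∈ rx.index, ∑ j ∈ ry.index,
          f (f (rx.left i ⊗ₜ ry.left j) ⊗ₜ g (rx.right i ⊗ₜ ry.right j))) =
        counit (R := k) y • x ∧
      (∑ i ∈ rx.index, ∑ j ∈ ry.index,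
          g (f (rx.left i ⊗ₜ ry.left j) ⊗ₜ g (rx.right i ⊗ₜ ry.right j))) =
        counit (R := k) x • y) ↔
    ∀ (x y : H) (rx : CoalgRepr k x),
      g (x ⊗ₜ y) =
        ∑ i ∈ rx.index, f (antipode (R := k) (f (rx.left i ⊗ₜ y)) ⊗ₜ rx.right i) := by
  constructor
  · intro cond x y rx
    exact Stmt11Fwd.forward h cond x y rx
  · intro h2 x y rx ry
    exact ⟨Stmt11Back.backA h h2 x y rx ry, Stmt11Back.backB h h2 x y rx ry⟩

end
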